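/- C_max(ρ) := min_{δ diagonal state} log₂ min{λ : ρ ≤ λδ} is monotone under MIO: if Λ is a CPTP map sending every diagonal state to a diagonal state, then C_max(Λ(ρ)) ≤ C_max(ρ) for every density operator ρ. -/

import Mathlib

open Matrix
open scoped ComplexOrder

/-- `E` is completely positive: `id_k ⊗ E` maps positive semidefinite matrices to
positive semidefinite matrices for every `k`. -/
def IsCP (dA dB : ℕ)
    (E : Matrix (Fin dA) (Fin dA) ℂ →ₗ[ℂ] Matrix (Fin dB) (Fin dB) ℂ) : Prop :=
  ∀ (k : ℕ) (M : Matrix (Fin k × Fin dA) (Fin k × Fin dA) ℂ), M.PosSemidef →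
    (Matrix.of fun p q => E (Matrix.of fun i j => M (p.1, i) (q.1, j)) p.2 q.2 :
      Matrix (Fin k × Fin dB) (Fin k × Fin dB) ℂ).PosSemidef

/-- `E` is trace preserving. -/
def IsTP (dA dB : ℕ)
    (E : Matrix (Fin dA) (Fin dA) ℂ →ₗ[ℂ] Matrix (Fin dB) (Fin dB) ℂ) : Prop :=
  ∀ X : Matrix (Fin dA) (Fin dA) ℂ, (E X).trace = X.trace

/-!
A feasible pair `(λ, δ)` for `ρ` is pushed by `Λ` to the feasible pair `(λ, Λ δ)` for `Λ ρ`: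
`Λ δ` is again a diagonal state and `λ Λ δ - Λ ρ = Λ (λ δ - ρ) ≥ 0`. So the feasible set of
`Λ ρ` contains that of `ρ` and its infimum is smaller. The feasible set of `ρ` is nonempty
(`λ = d`, `δ = 1/d`, since `ρ ≤ tr ρ • 1`), and every feasible `λ` is at least `1` (take
traces), so both infima are positive and `logb 2` is monotone on them.
-/

theorem IsCP.posSemidef_map {dA dB : ℕ}
    {E : Matrix (Fin dA) (Fin dA) ℂ →ₗ[ℂ] Matrix (Fin dB) (Fin dB) ℂ}
    (hE : IsCP dA dB E) {X : Matrix (Fin dA) (Fin dA) ℂ} (hX : X.PosSemidef) :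
    (E X).PosSemidef := by
  have h := hE 1 (X.submatrix Prod.snd Prod.snd) (hX.submatrix _)
  exact h.submatrix (fun i : Fin dB => ((0 : Fin 1), i))

namespace Matrix

variable {n : Type*} [Fintype n] [DecidableEq n]

open scoped MatrixOrder in
theorem PosSemidef.posSemidef_trace_smul_one_sub {A : Matrix n n ℂ} (hA : A.PosSemidef) :
    (A.trace • (1 : Matrix n n ℂ) - A).PosSemidef := by
  have hle : A ≤ algebraMap ℝ (Matrix n n ℂ) (∑ i, hA.1.eigenvalues i) := by
    refine le_algebraMap_of_spectrum_le (fun r hr => ?_) hA.1.isSelfAdjoint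
    obtain ⟨i, rfl⟩ := hA.1.spectrum_real_eq_range_eigenvalues ▸ hr
    exact Finset.single_le_sum (fun j _ => hA.eigenvalues_nonneg j) (Finset.mem_univ i)
  have htr : A.trace • (1 : Matrix n n ℂ) =
      algebraMap ℝ (Matrix n n ℂ) (∑ i, hA.1.eigenvalues i) := by
    rw [hA.1.trace_eq_sum_eigenvalues, Algebra.algebraMap_eq_smul_one, ← Complex.coe_smul]
    push_cast
    rfl
  rwa [htr]

end Matrix

section CMax

variable {m n : Type*} [Fintype m] [Fintype n]

/-- The values `λ ≥ 0` with `ρ ≤ λ δ` for some diagonal state `δ`; `C_max ρ` is the `logb 2` of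
its infimum. -/
def cmaxFeasible (ρ : Matrix n n ℂ) : Set ℝ :=
  {lam : ℝ | 0 ≤ lam ∧ ∃ δ : Matrix n n ℂ,
    δ.PosSemidef ∧ δ.trace = 1 ∧ δ.IsDiag ∧ ((lam : ℂ) • δ - ρ).PosSemidef}

theorem one_le_of_mem_cmaxFeasible {ρ : Matrix n n ℂ} (hρtr : ρ.trace = 1) {lam : ℝ}
    (hlam : lam ∈ cmaxFeasible ρ) : 1 ≤ lam := by
  obtain ⟨-, δ, -, hδtr, -, hle⟩ := hlam
  have htr : ((lam : ℂ) • δ - ρ).trace = ((lam - 1 : ℝ) : ℂ) := by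
    rw [trace_sub, trace_smul, hδtr, hρtr, smul_eq_mul, mul_one]
    push_cast
    rfl
  have := hle.trace_nonneg
  rw [htr, Complex.zero_le_real] at this
  linarith

theorem card_mem_cmaxFeasible [DecidableEq n] {ρ : Matrix n n ℂ} (hρ : ρ.PosSemidef) (hρtr : ρ.trace = 1) :
    (Fintype.card n : ℝ) ∈ cmaxFeasible ρ := by
  have hcard : (Fintype.card n : ℂ) ≠ 0 := by
    intro h
    rw [Nat.cast_eq_zero, Fintype.card_eq_zero_iff] at h
    simp [trace] at hρtr
  refine ⟨by positivity, (Fintype.card n : ℂ)⁻¹ • 1,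
    PosSemidef.one.smul (by simp), by simp [hcard], isDiag_one.smul _, ?_⟩
  rw [Complex.ofReal_natCast, smul_smul, mul_inv_cancel₀ hcard, ← hρtr]
  exact hρ.posSemidef_trace_smul_one_sub

theorem cmaxFeasible_subset_map (Λ : Matrix m m ℂ →ₗ[ℂ] Matrix n n ℂ)
    (hpos : ∀ X, X.PosSemidef → (Λ X).PosSemidef) (htr : ∀ X, (Λ X).trace = X.trace)
    (hdiag : ∀ δ, δ.IsDiag → (Λ δ).IsDiag) (ρ : Matrix m m ℂ) :
    cmaxFeasible ρ ⊆ cmaxFeasible (Λ ρ) := by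
  rintro lam ⟨hlam, δ, hδ, hδtr, hδdiag, hle⟩
  refine ⟨hlam, Λ δ, hpos δ hδ, (htr δ).trans hδtr, hdiag δ hδdiag, ?_⟩
  simpa only [map_sub, map_smul] using hpos _ hle

end CMax

/-- `C_max(ρ) := min_{δ diagonal state} log₂ min{λ ≥ 0 : ρ ≤ λδ}`
is monotone under maximally incoherent operations: if `Λ` is CPTP and sends
every diagonal state to a diagonal state, then `C_max(Λ(ρ)) ≤ C_max(ρ)` for
every density operator `ρ`. -/
theorem cmax_monotone_MIO (d : ℕ)
    (Λ : Matrix (Fin d) (Fin d) ℂ →ₗ[ℂ] Matrix (Fin d) (Fin d) ℂ)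
    (hCP : IsCP d d Λ) (hTP : IsTP d d Λ)
    (hMIO : ∀ δ : Matrix (Fin d) (Fin d) ℂ, δ.IsDiag → (Λ δ).IsDiag)
    (ρ : Matrix (Fin d) (Fin d) ℂ) (hρ : ρ.PosSemidef) (hρtr : ρ.trace = 1) :
    Real.logb 2
        (sInf {lam : ℝ | 0 ≤ lam ∧ ∃ δ : Matrix (Fin d) (Fin d) ℂ,
          δ.PosSemidef ∧ δ.trace = 1 ∧ δ.IsDiag ∧
          ((lam : ℂ) • δ - Λ ρ).PosSemidef}) ≤
      Real.logb 2
        (sInf {lam : ℝ | 0 ≤ lam ∧ ∃ δ : Matrix (Fin d) (Fin d) ℂ,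
          δ.PosSemidef ∧ δ.trace = 1 ∧ δ.IsDiag ∧
          ((lam : ℂ) • δ - ρ).PosSemidef}) := by
  change Real.logb 2 (sInf (cmaxFeasible (Λ ρ))) ≤ Real.logb 2 (sInf (cmaxFeasible ρ))
  have hne : (cmaxFeasible ρ).Nonempty := ⟨_, card_mem_cmaxFeasible hρ hρtr⟩
  have hsub : cmaxFeasible ρ ⊆ cmaxFeasible (Λ ρ) :=
    cmaxFeasible_subset_map Λ (fun _ => hCP.posSemidef_map) hTP hMIO ρ
  have hpos : 0 < sInf (cmaxFeasible (Λ ρ)) :=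
    one_pos.trans_le <| le_csInf (hne.mono hsub) fun _ =>
      one_le_of_mem_cmaxFeasible ((hTP ρ).trans hρtr)
  exact Real.logb_le_logb_of_le one_lt_two hpos
    (csInf_le_csInf ⟨0, fun _ hlam => hlam.1⟩ hne hsub)
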